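/- arXiv:2008.12261 — 6 statements merged into one kernel-verified Lean document; each statement's English description precedes it below -/
import Mathlib

section
/- Let R be a centrally essential ring (with 1 ≠ 0) and suppose there exists a maximal right ideal M of R that is not a two-sided ideal. Then there exists a nonzero central element c of R such that c lies in Mⁿ for every positive integer n (so the intersection of the center of R with ⋂_{n≥1} Mⁿ is nonzero). -/
/-- A ring `R` is *centrally essential* if for every nonzero `a : R` there exist
nonzero central elements `x, y` with `a * x = y`. -/
def IsCentrallyEssential (R : Type*) [Ring R] : Prop :=
  ∀ a : R, a ≠ 0 → ∃ x y : R, x ∈ Subring.center R ∧ y ∈ Subring.center R ∧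
    x ≠ 0 ∧ y ≠ 0 ∧ a * x = y

/-- An additive subgroup of a ring is a right ideal if it is closed under
right multiplication by arbitrary ring elements. -/
def IsRightIdeal {R : Type*} [Ring R] (I : AddSubgroup R) : Prop :=
  ∀ x ∈ I, ∀ r : R, x * r ∈ I

/-- An additive subgroup of a ring is a left ideal if it is closed under
left multiplication by arbitrary ring elements. -/
def IsLeftIdeal {R : Type*} [Ring R] (I : AddSubgroup R) : Prop :=
  ∀ x ∈ I, ∀ r : R, r * x ∈ I

/-- A maximal right ideal: a proper right ideal maximal among proper right ideals. -/
def IsMaximalRightIdeal {R : Type*} [Ring R] (M : AddSubgroup R) : Prop :=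
  IsRightIdeal M ∧ M ≠ ⊤ ∧ ∀ I : AddSubgroup R, IsRightIdeal I → M < I → I = ⊤

/-- The `n`-th power (`n ≥ 1`) of an additive subgroup `M` of a ring:
`addSubgroupPow M 1 = M` and `addSubgroupPow M (n+1)` is the additive subgroup
generated by the products `a * b` with `a ∈ M`, `b ∈ addSubgroupPow M n`; for
`n ≥ 1` this is the additive subgroup generated by all `n`-fold products of
elements of `M`.  (The value at `0` is irrelevant; we set it to `⊤`.) -/
def addSubgroupPow {R : Type*} [Ring R] (M : AddSubgroup R) : ℕ → AddSubgroup R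
  | 0 => ⊤
  | 1 => M
  | (n + 2) =>
      AddSubgroup.closure {x : R | ∃ a ∈ M, ∃ b ∈ addSubgroupPow M (n + 1), x = a * b}

lemma addSubgroupPow_mul_mem {R : Type*} [Ring R] (M : AddSubgroup R) (n : ℕ)
    {a b : R} (ha : a ∈ M) (hb : b ∈ addSubgroupPow M (n + 1)) :
    a * b ∈ addSubgroupPow M (n + 2) :=
  AddSubgroup.subset_closure ⟨a, ha, b, hb, rfl⟩

lemma addSubgroupPow_rightIdeal {R : Type*} [Ring R] (M : AddSubgroup R)
    (hM : IsRightIdeal M) (n : ℕ) : IsRightIdeal (addSubgroupPow M (n + 1)) := by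
  induction n with
  | zero => exact hM
  | succ k ih =>
    intro z hz r
    induction hz using AddSubgroup.closure_induction with
    | mem w hw =>
        obtain ⟨a, ha, b, hb, rfl⟩ := hw
        rw [mul_assoc]
        exact addSubgroupPow_mul_mem M k ha (ih b hb r)
    | zero => simpa using (addSubgroupPow M (k + 2)).zero_mem
    | add u v _ _ hu hv => simpa [add_mul] using (addSubgroupPow M (k + 2)).add_mem hu hv
    | neg u _ hu => simpa [neg_mul] using (addSubgroupPow M (k + 2)).neg_mem hu

/-- Proposition 2.1: if `R` is a centrally essential ring and `M` is a maximal right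
ideal of `R` that is not a two-sided ideal, then the center of `R` meets
`⋂_{n ≥ 1} Mⁿ` nontrivially. -/
theorem centrallyEssential_center_inter_powers_ne_bot
    (R : Type*) [Ring R] [Nontrivial R]
    (hce : IsCentrallyEssential R)
    (M : AddSubgroup R) (hM : IsMaximalRightIdeal M) (hnotLeft : ¬ IsLeftIdeal M) :
    ∃ c : R, c ∈ Subring.center R ∧ c ≠ 0 ∧ ∀ n : ℕ, 1 ≤ n → c ∈ addSubgroupPow M n := by
  obtain ⟨hMr, hMne, hMmax⟩ := hM
  -- `1 ∉ M`
  have hone : (1 : R) ∉ M := by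
    intro h1
    apply hMne
    ext r
    simp only [AddSubgroup.mem_top, iff_true]
    simpa using hMr 1 h1 r
  -- there are `m ∈ M`, `a` with `a * m ∉ M`
  unfold IsLeftIdeal at hnotLeft
  push_neg at hnotLeft
  obtain ⟨m, hm, a, ham⟩ := hnotLeft
  -- the right ideal `M + aM`
  set I : AddSubgroup R := M ⊔ AddSubgroup.map (AddMonoidHom.mulLeft a) M with hI
  have memI : ∀ z : R, z ∈ I ↔ ∃ u ∈ M, ∃ v ∈ M, z = u + a * v := by
    intro z
    rw [hI, AddSubgroup.mem_sup]
    constructor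
    · rintro ⟨u, hu, w, hw, rfl⟩
      obtain ⟨v, hv, rfl⟩ := hw
      exact ⟨u, hu, v, hv, rfl⟩
    · rintro ⟨u, hu, v, hv, rfl⟩
      exact ⟨u, hu, a * v, ⟨v, hv, rfl⟩, rfl⟩
  have hIr : IsRightIdeal I := by
    intro z hz r
    rw [memI] at hz ⊢
    obtain ⟨u, hu, v, hv, rfl⟩ := hz
    exact ⟨u * r, hMr u hu r, v * r, hMr v hv r, by rw [add_mul, mul_assoc]⟩
  have hMI : M < I := by
    refine lt_of_le_of_ne le_sup_left ?_
    intro hMeq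
    apply ham
    have : a * m ∈ I := (memI (a * m)).2 ⟨0, M.zero_mem, m, hm, by rw [zero_add]⟩
    rwa [← hMeq] at this
  have hIt : I = ⊤ := hMmax I hIr hMI
  have h1I : (1 : R) ∈ I := hIt ▸ AddSubgroup.mem_top 1
  obtain ⟨m₁, hm₁, m₂, hm₂, h1⟩ := (memI 1).1 h1I
  -- `m₂ ≠ 0`
  have hm₂ne : m₂ ≠ 0 := by
    rintro rfl
    apply hone
    rw [mul_zero, add_zero] at h1
    exact h1 ▸ hm₁

  obtain ⟨x, y, hx, hy, hxne, hyne, hxy⟩ := hce m₂ hm₂ne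
  have hxc : ∀ g : R, g * x = x * g := fun g => Subring.mem_center_iff.1 hx g
  have hyc : ∀ g : R, g * y = y * g := fun g => Subring.mem_center_iff.1 hy g
  refine ⟨y, hy, hyne, ?_⟩
  -- main induction: `y ∈ M^(n+1)` for all `n`
  have key : ∀ n : ℕ, y ∈ addSubgroupPow M (n + 1) := by
    intro n
    induction n with
    | zero => exact hxy ▸ hMr m₂ hm₂ x
    | succ k ih =>
      have hyeq : y = m₁ * y + (m₂ * y) * a := by
        have e1 : x = m₁ * x + a * (m₂ * x) := by
          calc x = (m₁ + a * m₂) * x := by rw [← h1, one_mul]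
          _ = m₁ * x + a * (m₂ * x) := by rw [add_mul, mul_assoc]
        calc y = m₂ * x := hxy.symm
        _ = m₂ * (m₁ * x + a * (m₂ * x)) := by rw [← e1]
        _ = m₂ * (m₁ * x) + m₂ * (a * y) := by rw [mul_add, hxy]
        _ = m₂ * (x * m₁) + m₂ * (y * a) := by rw [hxc m₁, hyc a]
        _ = (m₂ * x) * m₁ + (m₂ * y) * a := by rw [← mul_assoc, ← mul_assoc]
        _ = m₁ * y + (m₂ * y) * a := by rw [hxy, ← hyc m₁]
      rw [hyeq]
      have h1' : m₁ * y ∈ addSubgroupPow M (k + 2) := addSubgroupPow_mul_mem M k hm₁ ih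
      have h2' : m₂ * y ∈ addSubgroupPow M (k + 2) := addSubgroupPow_mul_mem M k hm₂ ih
      exact (addSubgroupPow M (k + 2)).add_mem h1'
        (addSubgroupPow_rightIdeal M hMr (k + 1) (m₂ * y) h2' a)
  intro n hn
  obtain ⟨k, rfl⟩ := Nat.exists_eq_add_of_le hn
  simpa [Nat.add_comm] using key k
end

section
/- Let R be a centrally essential ring (with 1 ≠ 0). Then every minimal right ideal of R is contained in the center of R; in particular, every minimal right ideal of R is a two-sided ideal. -/
/-- A minimal right ideal: a nonzero right ideal containing no right ideals
other than `0` and itself. -/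
def IsMinimalRightIdeal {R : Type*} [Ring R] (I : AddSubgroup R) : Prop :=
  IsRightIdeal I ∧ I ≠ ⊥ ∧ ∀ J : AddSubgroup R, IsRightIdeal J → J ≤ I → J = ⊥ ∨ J = I

/-- In a minimal right ideal `I`, every element is a right multiple of any
fixed nonzero element of `I` (since `aR` is a nonzero right ideal inside `I`). -/
lemma aux_exists_mul_eq {R : Type*} [Ring R] {I : AddSubgroup R}
    (hIr : IsRightIdeal I)
    (hmin : ∀ J : AddSubgroup R, IsRightIdeal J → J ≤ I → J = ⊥ ∨ J = I)
    {a b : R} (ha : a ∈ I) (ha0 : a ≠ 0) (hb : b ∈ I) : ∃ v, a * v = b := by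
  set J : AddSubgroup R := (AddMonoidHom.mulLeft a).range with hJ
  have hmem : ∀ x : R, x ∈ J ↔ ∃ r : R, a * r = x := by
    intro x
    simp [hJ, AddMonoidHom.mem_range, AddMonoidHom.mulLeft]
  have hJr : IsRightIdeal J := by
    intro x hx s
    obtain ⟨r, rfl⟩ := (hmem x).1 hx
    exact (hmem _).2 ⟨r * s, (mul_assoc a r s).symm⟩
  have hJI : J ≤ I := by
    intro x hx
    obtain ⟨r, rfl⟩ := (hmem x).1 hx
    exact hIr a ha r
  rcases hmin J hJr hJI with h | h
  · exact absurd (h ▸ (hmem a).2 ⟨1, mul_one a⟩) (by simpa using ha0)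
  · exact (hmem b).1 (h ▸ hb)

/-- Proposition 2.2: in a centrally essential ring, every minimal right ideal is
contained in the center; in particular it is a two-sided ideal. -/
theorem centrallyEssential_minimal_right_ideal_subset_center
    (R : Type*) [Ring R] [Nontrivial R]
    (hce : IsCentrallyEssential R)
    (I : AddSubgroup R) (hI : IsMinimalRightIdeal I) :
    (I : Set R) ⊆ (Subring.center R : Set R) ∧ IsLeftIdeal I := by
  obtain ⟨hIr, hIne, hmin⟩ := hI
  -- pick a nonzero element of `I`
  obtain ⟨m, hmI, hm0⟩ : ∃ m ∈ I, m ≠ 0 := by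
    by_contra h
    push_neg at h
    exact hIne (by ext x; simpa [AddSubgroup.mem_bot] using
      ⟨fun hx => h x hx, fun hx => hx ▸ I.zero_mem⟩)
  -- produce a nonzero central element `y ∈ I`
  obtain ⟨x₀, y, hx₀c, hyc, hx₀0, hy0, hmx⟩ := hce m hm0
  have hyI : y ∈ I := hmx ▸ hIr m hmI x₀
  have hycen : ∀ t : R, t * y = y * t := fun t => Subring.mem_center_iff.mp hyc t
  -- Key step: `y` annihilates all commutators.
  have key : ∀ p q : R, y * (p * q - q * p) = 0 := by
    intro p q
    by_cases hyp : y * p = 0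
    · have h1 : y * (p * q) = 0 := by rw [← mul_assoc, hyp, zero_mul]
      have h2 : y * (q * p) = 0 := by
        calc y * (q * p) = q * (y * p) := by
              rw [← mul_assoc, ← hycen q, mul_assoc]
        _ = 0 := by rw [hyp, mul_zero]
      rw [mul_sub, h1, h2, sub_zero]
    · obtain ⟨x, y₂, hxc, hy₂c, hx0, hy₂0, hpx⟩ := hce (y * p) hyp
      have hxcen : ∀ t : R, t * x = x * t := fun t => Subring.mem_center_iff.mp hxc t
      have hy₂cen : ∀ t : R, t * y₂ = y₂ * t := fun t => Subring.mem_center_iff.mp hy₂c t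
      have hyxcen : ∀ t : R, t * (y * x) = y * x * t := by
        intro t
        rw [← mul_assoc, hycen t, mul_assoc, hxcen t, ← mul_assoc]
      -- `y * x` is a nonzero central element of `I` annihilating the commutator
      have hann : (y * x) * (p * q - q * p) = 0 := by
        have h1 : y * x * (p * q) = y₂ * q := by
          rw [← hpx]
          calc y * x * (p * q) = y * (x * p) * q := by
                rw [mul_assoc, ← mul_assoc x p q, ← mul_assoc]
          _ = y * p * x * q := by rw [← hxcen p, ← mul_assoc]
        have h2 : y * x * (q * p) = y₂ * q := by
          calc y * x * (q * p) = q * (y * x * p) := by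
                rw [← mul_assoc, ← hyxcen q, mul_assoc]
          _ = q * (y * p * x) := by
                rw [mul_assoc y x p, ← hxcen p, ← mul_assoc y p x]
          _ = y₂ * q := by rw [hpx, hy₂cen q]
        rw [mul_sub, h1, h2, sub_self]
      have hyxI : y * x ∈ I := hIr y hyI x
      have hyx0 : y * x ≠ 0 := by
        intro h
        apply hy₂0
        rw [← hpx, mul_assoc, hxcen p, ← mul_assoc, h, zero_mul]
      -- minimality gives `x'` with `(y*x) * x' = y`; transfer annihilation to `y`
      obtain ⟨x', hx'⟩ := aux_exists_mul_eq hIr hmin hyxI hyx0 hyI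
      calc y * (p * q - q * p) = y * x * x' * (p * q - q * p) := by rw [hx']
      _ = x' * (y * x * (p * q - q * p)) := by
            rw [mul_assoc (y * x) x', ← mul_assoc, ← hyxcen x', mul_assoc]
      _ = 0 := by rw [hann, mul_zero]
  -- every element of `I` is central
  have hcent : ∀ a ∈ I, a ∈ Subring.center R := by
    intro a haI
    obtain ⟨v, hv⟩ := aux_exists_mul_eq hIr hmin hyI hy0 haI
    rw [Subring.mem_center_iff]
    intro s
    have hk := key v s
    rw [mul_sub, sub_eq_zero] at hk
    rw [← hv, ← mul_assoc, hycen s, mul_assoc, ← hk, ← mul_assoc]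
  refine ⟨hcent, fun a haI r => ?_⟩
  rw [Subring.mem_center_iff.mp (hcent a haI) r]
  exact hIr a haI r
end

section
/- Let R be a centrally essential ring (with 1 ≠ 0) and let J be a closed right ideal of R containing a right regular element. Then J is a two-sided ideal of R. -/
/-- A right ideal `K` is an essential extension of a right ideal `J ≤ K` if every
nonzero right ideal contained in `K` meets `J` nontrivially. -/
def IsEssentialExtensionOf {R : Type*} [Ring R] (K J : AddSubgroup R) : Prop :=
  J ≤ K ∧ ∀ X : AddSubgroup R, IsRightIdeal X → X ≤ K → X ≠ ⊥ → X ⊓ J ≠ ⊥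

/-- A right ideal `J` is closed if it equals every right ideal which is an
essential extension of it. -/
def IsClosedRightIdeal {R : Type*} [Ring R] (J : AddSubgroup R) : Prop :=
  IsRightIdeal J ∧ ∀ K : AddSubgroup R, IsRightIdeal K → IsEssentialExtensionOf K J → K = J

/-- Proposition 2.3: in a centrally essential ring, a closed right ideal containing a
right regular element (left non-zero-divisor) is a two-sided ideal. -/
theorem centrallyEssential_closed_right_ideal_with_regular_is_ideal
    (R : Type*) [Ring R] [Nontrivial R]
    (hce : IsCentrallyEssential R)
    (J : AddSubgroup R) (hJ : IsClosedRightIdeal J)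
    (hreg : ∃ y ∈ J, ∀ x : R, y * x = 0 → x = 0) :
    IsLeftIdeal J := by
  obtain ⟨u, huJ, hu⟩ := hreg
  have hTop : (⊤ : AddSubgroup R) = J := by
    apply hJ.2 ⊤ (fun x _ r => trivial)
    refine ⟨le_top, fun X hX _ hXne => ?_⟩
    obtain ⟨a, haX, ha⟩ := X.bot_or_exists_ne_zero.resolve_left hXne
    obtain ⟨x, y, hxC, hyC, hx0, hy0, hxy⟩ := hce a ha
    intro h
    have hmem : a * (x * u) ∈ X ⊓ J := by
      constructor
      · exact hX a haX (x * u)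
      · have : a * (x * u) = u * y := by
          rw [← mul_assoc, hxy, (Subring.mem_center_iff.mp hyC) u]
        rw [this]
        exact hJ.1 u huJ y
    rw [h] at hmem
    have : a * (x * u) = 0 := hmem
    rw [← mul_assoc, hxy, ← (Subring.mem_center_iff.mp hyC) u] at this
    exact hy0 (hu y this)
  intro x _ r
  rw [← hTop]
  trivial
end

section
/- Let R be a centrally essential torsion-free ring of finite rank. Then R is right quasi-invariant and left quasi-invariant: every maximal right ideal of R is a two-sided ideal, and every maximal left ideal of R is a two-sided ideal. -/
open TensorProduct

open Polynomial

/-- A maximal left ideal: a proper left ideal maximal among proper left ideals. -/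
def IsMaximalLeftIdeal {R : Type*} [Ring R] (M : AddSubgroup R) : Prop :=
  IsLeftIdeal M ∧ M ≠ ⊤ ∧ ∀ I : AddSubgroup R, IsLeftIdeal I → M < I → I = ⊤

section AuxCE

private lemma exists_X_pow_mul :
    ∀ (n : ℕ) (p : ℚ[X]), p.natDegree ≤ n → p ≠ 0 →
      ∃ (k : ℕ) (g : ℚ[X]), p = X ^ k * g ∧ g.coeff 0 ≠ 0 := by
  intro n
  induction n with
  | zero =>
    intro p hdeg hp
    refine ⟨0, p, by simp, ?_⟩
    intro h0
    obtain ⟨q, rfl⟩ := Polynomial.X_dvd_iff.mpr h0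
    have hq : q ≠ 0 := fun h => hp (by simp [h])
    have : (X * q).natDegree = q.natDegree + 1 := by
      rw [Polynomial.natDegree_mul Polynomial.X_ne_zero hq, Polynomial.natDegree_X]; omega
    omega
  | succ n ih =>
    intro p hdeg hp
    by_cases h0 : p.coeff 0 ≠ 0
    · exact ⟨0, p, by simp, h0⟩
    push_neg at h0
    obtain ⟨q, rfl⟩ := Polynomial.X_dvd_iff.mpr h0
    have hq : q ≠ 0 := fun h => hp (by simp [h])
    have hd : (X * q).natDegree = q.natDegree + 1 := by
      rw [Polynomial.natDegree_mul Polynomial.X_ne_zero hq, Polynomial.natDegree_X]; omega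
    obtain ⟨k, g, hkg, hg⟩ := ih q (by omega) hq
    exact ⟨k + 1, g, by rw [hkg]; ring, hg⟩

private lemma fitting {Q : Type*} [Ring Q] [Algebra ℚ Q] [FiniteDimensional ℚ Q]
    (z : Q) (hz : ¬ IsNilpotent z) :
    ∃ e s : Q, e * e = e ∧ e ≠ 0 ∧ s * (e * z) = e := by
  obtain ⟨p, hmonic, hpz⟩ := (Algebra.IsIntegral.of_finite ℚ Q).isIntegral z
  have hpz' : aeval z p = 0 := hpz
  set q : ℚ[X] := X * p with hqdef
  have hq0 : q ≠ 0 := mul_ne_zero Polynomial.X_ne_zero hmonic.ne_zero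
  have hqz : aeval z q = 0 := by rw [hqdef, map_mul, hpz', mul_zero]
  obtain ⟨k, g, hdec, hg0⟩ := exists_X_pow_mul q.natDegree q le_rfl hq0
  -- k ≥ 1
  have hk : 1 ≤ k := by
    by_contra hk0
    have hk0' : k = 0 := by omega
    have : q.coeff 0 = 0 := by rw [hqdef, Polynomial.mul_coeff_zero]; simp
    rw [hdec, hk0'] at this
    simp at this
    exact hg0 this
  set c : ℚ := g.coeff 0 with hcdef
  set u : ℚ[X] := -(C c⁻¹) * g.divX with hudef
  set v : ℚ[X] := C c⁻¹ with hvdef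
  have huv : u * X + v * g = 1 := by
    have h1 : X * g.divX + C c = g := Polynomial.X_mul_divX_add g
    have h1' : g - X * g.divX = C c := by linear_combination -h1
    calc u * X + v * g = C c⁻¹ * (g - X * g.divX) := by rw [hudef, hvdef]; ring
      _ = C c⁻¹ * C c := by rw [h1']
      _ = 1 := by rw [← Polynomial.C_mul, inv_mul_cancel₀ hg0, Polynomial.C_1]
  have hw : ∃ w : ℚ[X], (u * X) ^ k = 1 - g * w := by
    have h2 : u * X = 1 - v * g := by linear_combination huv
    have h3 : (1 - v * g) - 1 ∣ (1 - v * g) ^ k - 1 ^ k := sub_dvd_pow_sub_pow _ _ k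
    obtain ⟨t, ht⟩ := h3
    refine ⟨v * t, ?_⟩
    rw [h2]
    have h4 : (1 - v * g - 1) = -(v * g) := by ring
    rw [h4] at ht
    linear_combination ht
  obtain ⟨w, hw⟩ := hw
  set e : Q := aeval z ((u * X) ^ k) with hedef
  have P1 : ((u * X) ^ k) ^ 2 - (u * X) ^ k = -((u ^ k * w) * q) := by
    have h1 : ((u * X) ^ k) ^ 2 - (u * X) ^ k = (u * X) ^ k * ((1 - g * w) - 1) := by
      rw [← hw]; ring
    rw [h1, hdec]; ring
  have he : e * e = e := by
    have h := congrArg (aeval z) P1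
    rw [map_sub, map_pow, map_neg, map_mul, hqz, mul_zero, neg_zero, sub_eq_zero] at h
    rw [hedef, ← pow_two, h]
  have he0 : e ≠ 0 := by
    intro he0
    apply hz
    have P2 : (X : ℚ[X]) ^ k = X ^ k * (u * X) ^ k + w * q := by
      rw [hdec]; linear_combination (-(X:ℚ[X]) ^ k) * hw
    have h := congrArg (aeval z) P2
    rw [map_add, map_mul, map_mul, hqz, mul_zero, add_zero, ← hedef, he0, mul_zero,
      map_pow, aeval_X] at h
    exact ⟨k, h⟩
  refine ⟨e, aeval z (u ^ (2 * k) * X ^ (2 * k - 1)), he, he0, ?_⟩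
  have P3 : (u ^ (2 * k) * X ^ (2 * k - 1)) * ((u * X) ^ k * X) = ((u * X) ^ k) ^ 3 := by
    have h21 : (2 * k - 1) + 1 = 2 * k := by omega
    calc (u ^ (2 * k) * X ^ (2 * k - 1)) * ((u * X) ^ k * X)
        = (u ^ (2 * k) * (u * X) ^ k) * (X ^ (2 * k - 1) * X) := by ring
      _ = (u ^ (2 * k) * (u * X) ^ k) * X ^ ((2 * k - 1) + 1) := by rw [pow_succ]
      _ = (u ^ (2 * k) * (u * X) ^ k) * X ^ (2 * k) := by rw [h21]
      _ = ((u * X) ^ k) ^ 3 := by ring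
  have hedef' : e = (aeval z u * z) ^ k := by
    rw [hedef]; simp only [map_pow, map_mul, aeval_X]
  have he3 : e ^ 3 = e := by
    rw [pow_succ, pow_two, he, he]
  have h := congrArg (aeval z) P3
  simp only [map_mul, map_pow, aeval_X] at h
  rw [← hedef'] at h
  rw [he3] at h
  simp only [map_mul, map_pow, aeval_X]
  exact h

/-- Given a centrally essential finite-dimensional algebra and a nonzero idempotent `e`,
there is a nonzero central element `d` of the corner `eQ` annihilating all commutators. -/
private lemma core {Q : Type*} [Ring Q] [Algebra ℚ Q] [FiniteDimensional ℚ Q]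
    (hce : IsCentrallyEssential Q) (e : Q) (hee : e * e = e) (he0 : e ≠ 0) :
    ∃ d : Q, d ≠ 0 ∧ e * d = d ∧ (∀ x : Q, d * x = x * d) ∧
      ∀ a b : Q, (a * b - b * a) * d = 0 := by
  classical
  let Good : Q → Prop := fun d => d ≠ 0 ∧ e * d = d ∧ ∀ x : Q, d * x = x * d
  let W : Q → Submodule ℚ Q := fun d => LinearMap.range (LinearMap.mulLeft ℚ d)
  have hWmem : ∀ d x : Q, d * x ∈ W d := fun d x => ⟨x, rfl⟩
  have hex : ∃ n, ∃ d, Good d ∧ Module.finrank ℚ (W d) = n := by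
    obtain ⟨x, y, _, hyc, _, hy0, hxy⟩ := hce e he0
    refine ⟨_, y, ⟨hy0, ?_, fun z => (Subring.mem_center_iff.mp hyc z).symm⟩, rfl⟩
    rw [← hxy, ← mul_assoc, hee]
  obtain ⟨d₀, hgood, hmin⟩ :
      ∃ d, Good d ∧ ∀ d', Good d' → Module.finrank ℚ (W d) ≤ Module.finrank ℚ (W d') := by
    obtain ⟨d, hd, hdn⟩ := Nat.find_spec hex
    exact ⟨d, hd, fun d' hd' => hdn ▸ Nat.find_min' hex ⟨d', hd', rfl⟩⟩
  obtain ⟨hd0, hed, hdc⟩ := hgood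
  have claim1 : ∀ q s : Q, s * (q * d₀) = (q * d₀) * s := by
    intro q s
    by_cases hqd : q * d₀ = 0
    · rw [hqd, mul_zero, zero_mul]
    obtain ⟨x, y, hxc', hyc', hx0, hy0, hxy⟩ := hce (q * d₀) hqd
    have hxc : ∀ z : Q, x * z = z * x := fun z => (Subring.mem_center_iff.mp hxc' z).symm
    have hyc : ∀ z : Q, y * z = z * y := fun z => (Subring.mem_center_iff.mp hyc' z).symm
    have hdx0 : d₀ * x ≠ 0 := by
      intro h
      exact hy0 (by rw [← hxy, mul_assoc, h, mul_zero])
    have hgooddx : Good (d₀ * x) := by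
      refine ⟨hdx0, by rw [← mul_assoc, hed], fun z => ?_⟩
      calc d₀ * x * z = d₀ * (z * x) := by rw [mul_assoc, hxc z]
        _ = (d₀ * z) * x := by rw [mul_assoc]
        _ = (z * d₀) * x := by rw [hdc z]
        _ = z * (d₀ * x) := by rw [mul_assoc]
    have hle : W (d₀ * x) ≤ W d₀ := by
      rintro _ ⟨z, rfl⟩
      exact ⟨x * z, by simp only [LinearMap.mulLeft_apply, mul_assoc]⟩
    have heq : W (d₀ * x) = W d₀ :=
      Submodule.eq_of_le_of_finrank_le hle (hmin _ hgooddx)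
    have hmem : ∀ v ∈ W d₀, v * x ∈ W d₀ := by
      rintro _ ⟨z, rfl⟩
      exact ⟨z * x, by simp only [LinearMap.mulLeft_apply, mul_assoc]⟩
    set ρ : W d₀ →ₗ[ℚ] W d₀ := (LinearMap.mulRight ℚ x).restrict hmem with hρ
    have hsurj : Function.Surjective ρ := by
      rintro ⟨v, hv⟩
      rw [← heq] at hv
      obtain ⟨z, hz⟩ := hv
      refine ⟨⟨d₀ * z, hWmem d₀ z⟩, ?_⟩
      apply Subtype.ext
      simp only [hρ, LinearMap.restrict_apply, LinearMap.mulRight_apply]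
      rw [← hz]
      simp only [LinearMap.mulLeft_apply]
      show d₀ * z * x = d₀ * x * z
      rw [mul_assoc, mul_assoc, hxc z]
    have hinj : Function.Injective ρ := LinearMap.injective_iff_surjective.mpr hsurj
    have hA : s * (q * d₀) ∈ W d₀ := by
      have : s * (q * d₀) = d₀ * (s * q) := by
        rw [← hdc q, ← mul_assoc, ← hdc s, mul_assoc]
      rw [this]; exact hWmem _ _
    have hB : (q * d₀) * s ∈ W d₀ := by
      have : (q * d₀) * s = d₀ * (q * s) := by
        rw [← hdc q, mul_assoc]
      rw [this]; exact hWmem _ _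
    have hρAB : ρ ⟨s * (q * d₀), hA⟩ = ρ ⟨(q * d₀) * s, hB⟩ := by
      apply Subtype.ext
      simp only [hρ, LinearMap.restrict_apply, LinearMap.mulRight_apply]
      calc s * (q * d₀) * x = s * ((q * d₀) * x) := mul_assoc _ _ _
        _ = s * y := by rw [hxy]
        _ = y * s := (hyc s).symm
        _ = ((q * d₀) * x) * s := by rw [hxy]
        _ = (q * d₀) * (x * s) := mul_assoc _ _ _
        _ = (q * d₀) * (s * x) := by rw [hxc s]
        _ = (q * d₀) * s * x := (mul_assoc _ _ _).symm
    have := hinj hρAB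
    exact congrArg Subtype.val this
  refine ⟨d₀, hd0, hed, hdc, fun a b => ?_⟩
  have h1 : a * b * d₀ = b * a * d₀ := by
    calc a * b * d₀ = a * (b * d₀) := by rw [mul_assoc]
      _ = (b * d₀) * a := claim1 b a
      _ = b * (d₀ * a) := by rw [mul_assoc]
      _ = b * (a * d₀) := by rw [hdc a]
      _ = b * a * d₀ := by rw [mul_assoc]
  rw [sub_mul, h1, sub_self]

/-- In a centrally essential finite-dimensional rational algebra, every (left or right)
multiple of a commutator is nilpotent. -/
private lemma master {Q : Type*} [Ring Q] [Algebra ℚ Q] [FiniteDimensional ℚ Q]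
    (hce : IsCentrallyEssential Q) (a b t : Q) :
    IsNilpotent ((a * b - b * a) * t) ∧ IsNilpotent (t * (a * b - b * a)) := by
  constructor
  · by_contra hz
    obtain ⟨e, s, hee, he0, hs⟩ := fitting ((a * b - b * a) * t) hz
    obtain ⟨d, hd0, hed, hdc, hkill⟩ := core hce e hee he0
    have h1 : (e * ((a * b - b * a) * t)) * d = 0 := by
      have h2 : ((a * b - b * a) * t) * d = 0 := by
        rw [mul_assoc, ← hdc t, ← mul_assoc, hkill, zero_mul]
      rw [mul_assoc, h2, mul_zero]
    apply hd0
    calc d = e * d := hed.symm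
      _ = (s * (e * ((a * b - b * a) * t))) * d := by rw [hs]
      _ = s * ((e * ((a * b - b * a) * t)) * d) := mul_assoc _ _ _
      _ = 0 := by rw [h1, mul_zero]
  · by_contra hz
    obtain ⟨e, s, hee, he0, hs⟩ := fitting (t * (a * b - b * a)) hz
    obtain ⟨d, hd0, hed, hdc, hkill⟩ := core hce e hee he0
    have h1 : (e * (t * (a * b - b * a))) * d = 0 := by
      have h2 : (t * (a * b - b * a)) * d = 0 := by
        rw [mul_assoc, hkill, mul_zero]
      rw [mul_assoc, h2, mul_zero]
    apply hd0
    calc d = e * d := hed.symm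
      _ = (s * (e * (t * (a * b - b * a)))) * d := by rw [hs]
      _ = s * ((e * (t * (a * b - b * a))) * d) := mul_assoc _ _ _
      _ = 0 := by rw [h1, mul_zero]

private lemma tensor_inj {R : Type*} [Ring R]
    (htf : ∀ (n : ℤ) (r : R), n ≠ 0 → n • r = 0 → r = 0) :
    Function.Injective (fun r : R => (1:ℚ) ⊗ₜ[ℤ] r) := by
  have hbc : IsBaseChange ℚ (TensorProduct.mk ℤ ℚ R 1) := TensorProduct.isBaseChange ℤ R ℚ
  haveI hloc : IsLocalizedModule (nonZeroDivisors ℤ) (TensorProduct.mk ℤ ℚ R 1) :=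
    (isLocalizedModule_iff_isBaseChange (nonZeroDivisors ℤ) ℚ _).mpr hbc
  intro r r' h
  have h0 : TensorProduct.mk ℤ ℚ R 1 (r - r') = 0 := by
    simp only at h
    rw [map_sub]
    simp only [TensorProduct.mk_apply]
    rw [h, sub_self]
  obtain ⟨s, hs⟩ := (IsLocalizedModule.eq_zero_iff (nonZeroDivisors ℤ) _).mp h0
  have hsne : (s : ℤ) ≠ 0 := nonZeroDivisors.coe_ne_zero s
  have := htf s (r - r') hsne hs
  exact sub_eq_zero.mp this

private lemma ce_tensor {R : Type*} [Ring R]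
    (htf : ∀ (n : ℤ) (r : R), n ≠ 0 → n • r = 0 → r = 0)
    (hce : IsCentrallyEssential R) :
    IsCentrallyEssential (ℚ ⊗[ℤ] R) := by
  have hinj := tensor_inj htf
  have hcancel : ∀ (n : ℤ), n ≠ 0 → ∀ u v : ℚ ⊗[ℤ] R, n • u = n • v → u = v := by
    intro n hn u v h
    have h' : ((n : ℚ)) • u = ((n : ℚ)) • v := by
      rw [Int.cast_smul_eq_zsmul, Int.cast_smul_eq_zsmul]; exact h
    exact smul_right_injective _ (show ((n:ℚ)) ≠ 0 by exact_mod_cast hn) h'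
  have hcent : ∀ x : R, x ∈ Subring.center R →
      ((1:ℚ) ⊗ₜ[ℤ] x) ∈ Subring.center (ℚ ⊗[ℤ] R) := by
    intro x hx
    rw [Subring.mem_center_iff]
    intro g
    induction g using TensorProduct.induction_on with
    | zero => rw [zero_mul, mul_zero]
    | tmul c s =>
      rw [Algebra.TensorProduct.tmul_mul_tmul, Algebra.TensorProduct.tmul_mul_tmul,
        mul_one, one_mul, Subring.mem_center_iff.mp hx s]
    | add g₁ g₂ h1 h2 => rw [add_mul, mul_add, h1, h2]
  have hsmul : ∀ q : ℚ ⊗[ℤ] R, ∃ (n : ℤ) (r : R), n ≠ 0 ∧ n • q = (1:ℚ) ⊗ₜ[ℤ] r := by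
    intro q
    induction q using TensorProduct.induction_on with
    | zero => exact ⟨1, 0, one_ne_zero, by simp⟩
    | tmul c s =>
      refine ⟨(c.den : ℤ), c.num • s, by exact_mod_cast c.den_nz, ?_⟩
      rw [TensorProduct.smul_tmul']
      have h1 : (c.den : ℤ) • c = ((c.num : ℚ)) := by
        have hden : ((c.den : ℚ)) ≠ 0 := by exact_mod_cast c.den_nz
        have h : (c.num : ℚ) = c * (c.den : ℚ) := (div_eq_iff hden).mp (Rat.num_div_den c)
        rw [zsmul_eq_mul]
        push_cast
        linear_combination -h
      rw [h1]
      have h2 : ((c.num : ℚ)) = c.num • (1:ℚ) := by rw [zsmul_eq_mul, mul_one]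
      rw [h2, TensorProduct.smul_tmul]
    | add q₁ q₂ h1 h2 =>
      obtain ⟨n₁, r₁, hn₁, e₁⟩ := h1
      obtain ⟨n₂, r₂, hn₂, e₂⟩ := h2
      refine ⟨n₁ * n₂, n₂ • r₁ + n₁ • r₂, mul_ne_zero hn₁ hn₂, ?_⟩
      rw [smul_add]
      have h3 : (n₁ * n₂) • q₁ = n₂ • (n₁ • q₁) := by rw [mul_comm, mul_smul]
      have h4 : (n₁ * n₂) • q₂ = n₁ • (n₂ • q₂) := by rw [mul_smul]
      rw [h3, h4, e₁, e₂, ← TensorProduct.tmul_smul, ← TensorProduct.tmul_smul,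
        ← TensorProduct.tmul_add]
  intro q hq
  obtain ⟨n, r, hn, hnq⟩ := hsmul q
  have hr0 : r ≠ 0 := by
    rintro rfl
    apply hq
    apply hcancel n hn
    rw [hnq, smul_zero]
    exact (TensorProduct.tmul_zero _ _)
  obtain ⟨x, y, hxc, hyc, hx0, hy0, hxy⟩ := hce r hr0
  have hX0 : ((1:ℚ) ⊗ₜ[ℤ] x) ≠ (0 : ℚ ⊗[ℤ] R) := by
    intro h
    apply hx0
    apply hinj
    simpa using h
  have hYn : n • (q * ((1:ℚ) ⊗ₜ[ℤ] x)) = (1:ℚ) ⊗ₜ[ℤ] y := by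
    rw [← smul_mul_assoc, hnq, Algebra.TensorProduct.tmul_mul_tmul, one_mul, hxy]
  have hY0 : q * ((1:ℚ) ⊗ₜ[ℤ] x) ≠ 0 := by
    intro h
    apply hy0
    apply hinj
    have : (1:ℚ) ⊗ₜ[ℤ] y = (0 : ℚ ⊗[ℤ] R) := by rw [← hYn, h, smul_zero]
    simpa using this
  have hYc : q * ((1:ℚ) ⊗ₜ[ℤ] x) ∈ Subring.center (ℚ ⊗[ℤ] R) := by
    rw [Subring.mem_center_iff]
    intro g
    apply hcancel n hn
    calc n • (g * (q * ((1:ℚ) ⊗ₜ[ℤ] x)))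
        = g * (n • (q * ((1:ℚ) ⊗ₜ[ℤ] x))) := by rw [mul_smul_comm]
      _ = g * ((1:ℚ) ⊗ₜ[ℤ] y) := by rw [hYn]
      _ = ((1:ℚ) ⊗ₜ[ℤ] y) * g := Subring.mem_center_iff.mp (hcent y hyc) g
      _ = (n • (q * ((1:ℚ) ⊗ₜ[ℤ] x))) * g := by rw [hYn]
      _ = n • ((q * ((1:ℚ) ⊗ₜ[ℤ] x)) * g) := by rw [smul_mul_assoc]
  exact ⟨(1:ℚ) ⊗ₜ[ℤ] x, q * ((1:ℚ) ⊗ₜ[ℤ] x), hcent x hxc, hYc, hX0, hY0, rfl⟩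

end AuxCE

/-- Theorem 1.3 (first part): a centrally essential torsion-free ring of finite rank
is right and left quasi-invariant: every maximal right (resp. left) ideal is a
two-sided ideal. -/
theorem centrallyEssential_tffr_quasiInvariant
    (R : Type*) [Ring R] [Nontrivial R]
    (htf : ∀ (n : ℤ) (r : R), n ≠ 0 → n • r = 0 → r = 0)
    (hfr : FiniteDimensional ℚ (ℚ ⊗[ℤ] R))
    (hce : IsCentrallyEssential R) :
    (∀ M : AddSubgroup R, IsMaximalRightIdeal M → IsLeftIdeal M) ∧
    (∀ M : AddSubgroup R, IsMaximalLeftIdeal M → IsRightIdeal M) := by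
  classical
  have hinj := tensor_inj htf
  have hceQ := ce_tensor htf hce
  let j : R →ₐ[ℤ] ℚ ⊗[ℤ] R := Algebra.TensorProduct.includeRight
  have hjapp : ∀ r : R, j r = (1:ℚ) ⊗ₜ[ℤ] r := fun r => rfl
  have hnil : ∀ a b t : R,
      IsNilpotent ((a * b - b * a) * t) ∧ IsNilpotent (t * (a * b - b * a)) := by
    intro a b t
    have h := master hceQ (j a) (j b) (j t)
    constructor
    · obtain ⟨k, hk⟩ := h.1
      refine ⟨k, ?_⟩
      apply hinj
      show (1:ℚ) ⊗ₜ[ℤ] (((a * b - b * a) * t) ^ k) = (1:ℚ) ⊗ₜ[ℤ] (0:R)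
      rw [TensorProduct.tmul_zero, ← hjapp, map_pow, map_mul, map_sub, map_mul, map_mul, hk]
    · obtain ⟨k, hk⟩ := h.2
      refine ⟨k, ?_⟩
      apply hinj
      show (1:ℚ) ⊗ₜ[ℤ] ((t * (a * b - b * a)) ^ k) = (1:ℚ) ⊗ₜ[ℤ] (0:R)
      rw [TensorProduct.tmul_zero, ← hjapp, map_pow, map_mul, map_sub, map_mul, map_mul, hk]
  constructor
  · rintro M ⟨hMr, hMtop, hMmax⟩ x hx r
    have hw : (r * x - x * r) ∈ M := by
      by_contra hwM
      set w : R := r * x - x * r with hwdef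
      let A : AddSubgroup R :=
        { carrier := {z | ∃ u : R, z = w * u}
          add_mem' := by rintro a b ⟨u, rfl⟩ ⟨v, rfl⟩; exact ⟨u + v, (mul_add w u v).symm⟩
          zero_mem' := ⟨0, (mul_zero w).symm⟩
          neg_mem' := by rintro a ⟨u, rfl⟩; exact ⟨-u, (mul_neg w u).symm⟩ }
      have hIright : IsRightIdeal (M ⊔ A) := by
        intro z hz r'
        rw [AddSubgroup.mem_sup] at hz ⊢
        obtain ⟨m, hm, a, ⟨u, rfl⟩, rfl⟩ := hz
        exact ⟨m * r', hMr m hm r', w * (u * r'), ⟨u * r', rfl⟩, by rw [add_mul, mul_assoc]⟩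
      have hwA : w ∈ M ⊔ A :=
        AddSubgroup.mem_sup_right ⟨1, (mul_one w).symm⟩
      have hlt : M < M ⊔ A := by
        refine lt_of_le_of_ne le_sup_left fun hMA => hwM ?_
        rw [hMA]; exact hwA
      have htop := hMmax _ hIright hlt
      have h1 : (1:R) ∈ M ⊔ A := by rw [htop]; trivial
      rw [AddSubgroup.mem_sup] at h1
      obtain ⟨m, hm, a, ⟨u, rfl⟩, hmu⟩ := h1
      obtain ⟨k, hk⟩ := (hnil r x u).1
      have hminv : m * (∑ i ∈ Finset.range k, (w * u) ^ i) = 1 := by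
        have hm1 : m = 1 - w * u := eq_sub_of_add_eq hmu
        rw [hm1]
        have hgeom := mul_geom_sum (w * u) k
        calc (1 - w * u) * ∑ i ∈ Finset.range k, (w * u) ^ i
            = -(((w * u) - 1) * ∑ i ∈ Finset.range k, (w * u) ^ i) := by
              rw [← neg_sub (w * u) 1, neg_mul]
          _ = -((w * u) ^ k - 1) := by rw [hgeom]
          _ = 1 := by rw [hk]; norm_num
      have h1M : (1:R) ∈ M := by
        have := hMr m hm (∑ i ∈ Finset.range k, (w * u) ^ i)
        rwa [hminv] at this
      apply hMtop
      rw [AddSubgroup.eq_top_iff']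
      intro z
      simpa using hMr 1 h1M z
    have h2 : x * r + (r * x - x * r) = r * x := by abel
    rw [← h2]
    exact M.add_mem (hMr x hx r) hw
  · rintro M ⟨hMl, hMtop, hMmax⟩ x hx r
    have hw : (x * r - r * x) ∈ M := by
      by_contra hwM
      set w : R := x * r - r * x with hwdef
      let A : AddSubgroup R :=
        { carrier := {z | ∃ u : R, z = u * w}
          add_mem' := by rintro a b ⟨u, rfl⟩ ⟨v, rfl⟩; exact ⟨u + v, (add_mul u v w).symm⟩
          zero_mem' := ⟨0, (zero_mul w).symm⟩
          neg_mem' := by rintro a ⟨u, rfl⟩; exact ⟨-u, (neg_mul u w).symm⟩ }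
      have hIleft : IsLeftIdeal (M ⊔ A) := by
        intro z hz r'
        rw [AddSubgroup.mem_sup] at hz ⊢
        obtain ⟨m, hm, a, ⟨u, rfl⟩, rfl⟩ := hz
        exact ⟨r' * m, hMl m hm r', (r' * u) * w, ⟨r' * u, rfl⟩, by rw [mul_add, mul_assoc]⟩
      have hwA : w ∈ M ⊔ A :=
        AddSubgroup.mem_sup_right ⟨1, (one_mul w).symm⟩
      have hlt : M < M ⊔ A := by
        refine lt_of_le_of_ne le_sup_left fun hMA => hwM ?_
        rw [hMA]; exact hwA
      have htop := hMmax _ hIleft hlt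
      have h1 : (1:R) ∈ M ⊔ A := by rw [htop]; trivial
      rw [AddSubgroup.mem_sup] at h1
      obtain ⟨m, hm, a, ⟨u, rfl⟩, hmu⟩ := h1
      obtain ⟨k, hk⟩ := (hnil x r u).2
      have hminv : (∑ i ∈ Finset.range k, (u * w) ^ i) * m = 1 := by
        have hm1 : m = 1 - u * w := eq_sub_of_add_eq hmu
        rw [hm1]
        have hgeom := geom_sum_mul (u * w) k
        calc (∑ i ∈ Finset.range k, (u * w) ^ i) * (1 - u * w)
            = -((∑ i ∈ Finset.range k, (u * w) ^ i) * ((u * w) - 1)) := by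
              rw [← neg_sub (u * w) 1, mul_neg]
          _ = -((u * w) ^ k - 1) := by rw [hgeom]
          _ = 1 := by rw [hk]; norm_num
      have h1M : (1:R) ∈ M := by
        have := hMl m hm (∑ i ∈ Finset.range k, (u * w) ^ i)
        rwa [hminv] at this
      apply hMtop
      rw [AddSubgroup.eq_top_iff']
      intro z
      simpa using hMl 1 h1M z
    have h2 : r * x + (x * r - r * x) = x * r := by abel
    rw [← h2]
    exact M.add_mem (hMl x hx r) hw
end

section
/- Let R be a centrally essential torsion-free ring of finite rank. Then for all a, b ∈ R the commutator a·b − b·a is a nilpotent element of R (equivalently, the quotient of R by its upper nilradical is commutative). -/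
open TensorProduct

/-- Every nonzero integer polynomial can be written as `X ^ k * q` with `q.coeff 0 ≠ 0`. -/
private lemma exists_X_pow_mul_aux : ∀ (n : ℕ) (p : Polynomial ℤ), p.natDegree ≤ n → p ≠ 0 →
    ∃ (k : ℕ) (q : Polynomial ℤ), q.coeff 0 ≠ 0 ∧ p = Polynomial.X ^ k * q := by
  intro n
  induction n with
  | zero =>
    intro p hdeg hp
    refine ⟨0, p, ?_, by rw [pow_zero, one_mul]⟩
    intro h0
    apply hp
    rw [Polynomial.eq_C_of_natDegree_le_zero hdeg, h0, map_zero]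
  | succ n ih =>
    intro p hdeg hp
    by_cases h0 : p.coeff 0 = 0
    · have hX : Polynomial.X * p.divX = p := by
        have := Polynomial.X_mul_divX_add p
        rwa [h0, map_zero, add_zero] at this
      have hdvx : p.divX ≠ 0 := by
        intro h; apply hp; rw [← hX, h, mul_zero]
      have hdeg' : p.divX.natDegree ≤ n := by
        have := Polynomial.natDegree_divX_eq_natDegree_tsub_one (p := p)
        omega
      obtain ⟨k, q, hq, hfac⟩ := ih p.divX hdeg' hdvx
      exact ⟨k + 1, q, hq, by rw [← hX, hfac, pow_succ', mul_assoc]⟩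
    · exact ⟨0, p, h0, by rw [pow_zero, one_mul]⟩

/-- In a torsion-free centrally essential ring, any `f` with `f * f = N • f` (for a nonzero
integer `N`) is central.  (For `N = 1` this says idempotents are central.) -/
private lemma quasi_central {R : Type*} [Ring R]
    (htf : ∀ (n : ℤ) (r : R), n ≠ 0 → n • r = 0 → r = 0)
    (hce : IsCentrallyEssential R) {f : R} {N : ℤ} (hN : N ≠ 0)
    (hf : f * f = N • f) : f ∈ Subring.center R := by
  have key : ∀ u : R, f * u = N • u → u * f = 0 → u = 0 := by
    intro u hfu huf
    by_contra hu
    obtain ⟨x, y, hx, hy, hx0, hy0, hxy⟩ := hce u hu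
    have hxf : f * x = x * f := Subring.mem_center_iff.mp hx f
    have hyf : y * f = 0 := by
      rw [← hxy, mul_assoc, ← hxf, ← mul_assoc, huf, zero_mul]
    have hfy : f * y = N • y := by
      rw [← hxy, ← mul_assoc, hfu, smul_mul_assoc]
    have : N • y = 0 := by
      rw [← hfy, Subring.mem_center_iff.mp hy f, hyf]
    exact hy0 (htf N y hN this)
  have key' : ∀ u : R, f * u = 0 → u * f = N • u → u = 0 := by
    intro u hfu huf
    by_contra hu
    obtain ⟨x, y, hx, hy, hx0, hy0, hxy⟩ := hce u hu
    have hxf : f * x = x * f := Subring.mem_center_iff.mp hx f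
    have hyf : y * f = N • y := by
      rw [← hxy, mul_assoc, ← hxf, ← mul_assoc, huf, smul_mul_assoc]
    have hfy : f * y = 0 := by
      rw [← hxy, ← mul_assoc, hfu, zero_mul]
    have : N • y = 0 := by
      rw [← hyf, ← Subring.mem_center_iff.mp hy f, hfy]
    exact hy0 (htf N y hN this)
  have hNf1 : (N • (1:R) - f) * f = 0 := by
    rw [sub_mul, smul_mul_assoc, one_mul, hf, sub_self]
  have hfN1 : f * (N • (1:R) - f) = 0 := by
    rw [mul_sub, mul_smul_comm, mul_one, hf, sub_self]
  have h1 : ∀ r : R, N • (f * r) = f * (r * f) := by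
    intro r
    have h := key (f * (r * (N • (1:R) - f))) ?_ ?_
    · rw [mul_sub, mul_sub] at h
      have h2 : f * (r * (N • (1:R))) = f * (r * f) := by
        rwa [sub_eq_zero] at h
      rwa [mul_smul_comm, mul_one, mul_smul_comm] at h2
    · rw [← mul_assoc, hf, smul_mul_assoc]
    · rw [mul_assoc, mul_assoc, hNf1, mul_zero, mul_zero]
  have h2 : ∀ r : R, N • (r * f) = f * (r * f) := by
    intro r
    have h := key' (((N • (1:R) - f) * r) * f) ?_ ?_
    · rw [sub_mul, sub_mul, smul_mul_assoc, one_mul, smul_mul_assoc] at h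
      rw [sub_eq_zero] at h
      rw [h, mul_assoc]
    · rw [← mul_assoc, ← mul_assoc, hfN1, zero_mul, zero_mul]
    · rw [mul_assoc, mul_assoc, hf, mul_smul_comm, mul_smul_comm, mul_assoc]
  refine Subring.mem_center_iff.mpr fun r => ?_
  have h3 : N • (f * r - r * f) = 0 := by
    rw [smul_sub, h1 r, h2 r, sub_self]
  have h4 := htf N _ hN h3
  rw [sub_eq_zero] at h4
  exact h4.symm

/-- The final contradiction: if `t = a*b - b*a` and `f ≠ 0` is a central "quasi-idempotent"
(`f * f = N • f`) that annihilates every central annihilator of `t`, we get `False`. -/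
private lemma final_step {R : Type*} [Ring R]
    (htf : ∀ (n : ℤ) (r : R), n ≠ 0 → n • r = 0 → r = 0)
    (hce : IsCentrallyEssential R) (a b : R) {t f : R} {N : ℤ}
    (ht : t = a * b - b * a) (hNz : N ≠ 0)
    (hfc : f ∈ Subring.center R) (hff : f * f = N • f) (hf0 : f ≠ 0)
    (hfz : ∀ z : R, z ∈ Subring.center R → t * z = 0 → f * z = 0) : False := by
  have hcent : ∀ g : R, g * f = f * g := fun g => Subring.mem_center_iff.mp hfc g
  have haf : a * f ≠ 0 := by
    intro h
    have htf2 : t * f = 0 := by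
      rw [ht, sub_mul, mul_assoc, hcent b, ← mul_assoc, h, zero_mul,
        mul_assoc, h, mul_zero, sub_self]
    have hNf : N • f = 0 := by rw [← hff, hfz f hfc htf2]
    exact hf0 (htf N f hNz hNf)
  obtain ⟨x, y, hx, hy, hx0, hy0, hxy'⟩ := hce (a * f) haf
  have hx'c : f * x ∈ Subring.center R := Subring.mul_mem _ hfc hx
  have hcx' : ∀ g : R, g * (f * x) = f * x * g := fun g => Subring.mem_center_iff.mp hx'c g
  have hax' : a * (f * x) = y := by rw [← mul_assoc, hxy']
  have hx'0 : f * x ≠ 0 := fun h => hy0 (by rw [← hax', h, mul_zero])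
  have htx' : t * (f * x) = 0 := by
    have hab : a * b * (f * x) = y * b := by
      rw [mul_assoc, hcx' b, ← mul_assoc, hax']
    have hba : b * a * (f * x) = y * b := by
      rw [mul_assoc, hax', Subring.mem_center_iff.mp hy b]
    rw [ht, sub_mul, hab, hba, sub_self]
  have hNx' : N • (f * x) = 0 := by
    calc N • (f * x) = N • f * x := (smul_mul_assoc _ _ _).symm
      _ = f * f * x := by rw [hff]
      _ = f * (f * x) := mul_assoc _ _ _
      _ = 0 := hfz _ hx'c htx'
  exact hx'0 (htf N _ hNz hNx')

/-- Proposition 3.1: in a centrally essential torsion-free ring of finite rank,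
every commutator `a * b - b * a` is nilpotent (equivalently, the quotient by the
upper nilradical is commutative). -/
theorem centrallyEssential_tffr_commutator_nilpotent
    (R : Type*) [Ring R] [Nontrivial R]
    (htf : ∀ (n : ℤ) (r : R), n ≠ 0 → n • r = 0 → r = 0)
    (hfr : FiniteDimensional ℚ (ℚ ⊗[ℤ] R))
    (hce : IsCentrallyEssential R) :
    ∀ a b : R, IsNilpotent (a * b - b * a) := by
  intro a b
  by_contra hnil
  set t := a * b - b * a with ht
  -- Step 1: the powers of `t` are linearly dependent over `ℤ`.
  set d := Module.finrank ℚ (ℚ ⊗[ℤ] R) with hd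
  haveI : IsLocalizedModule (nonZeroDivisors ℤ) (TensorProduct.mk ℤ ℚ R 1) :=
    (isLocalizedModule_iff_isBaseChange (nonZeroDivisors ℤ) ℚ _).mpr
      (TensorProduct.isBaseChange (R := ℤ) (M := R) (S := ℚ))
  have hnind : ¬ LinearIndependent ℤ (fun i : Fin (d + 1) => t ^ (i : ℕ)) := by
    intro hli
    have hli' := hli.of_isLocalizedModule ℚ (nonZeroDivisors ℤ) (TensorProduct.mk ℤ ℚ R 1)
    have hcard := hli'.fintype_card_le_finrank
    rw [Fintype.card_fin] at hcard
    omega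
  obtain ⟨g, hrel, i₀, hg⟩ := Fintype.not_linearIndependent_iff.mp hnind
  -- Step 2: a nonzero integer polynomial annihilating `t`.
  have hpoly : ∃ p : Polynomial ℤ, p ≠ 0 ∧ Polynomial.aeval t p = 0 := by
    refine ⟨∑ i, Polynomial.C (g i) * Polynomial.X ^ (i : ℕ), ?_, ?_⟩
    · intro h
      have hc : (∑ i, Polynomial.C (g i) * Polynomial.X ^ (i : ℕ)).coeff (i₀ : ℕ) = g i₀ := by
        rw [Polynomial.finset_sum_coeff]
        simp only [Polynomial.coeff_C_mul, Polynomial.coeff_X_pow]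
        rw [Finset.sum_eq_single i₀]
        · simp
        · intro j _ hj
          have hne : (j : ℕ) ≠ (i₀ : ℕ) := fun hh => hj (Fin.ext hh)
          rw [if_neg (Ne.symm hne), mul_zero]
        · simp
      rw [h, Polynomial.coeff_zero] at hc
      exact hg hc.symm
    · rw [map_sum, ← hrel]
      refine Finset.sum_congr rfl fun i _ => ?_
      rw [map_mul, map_pow, Polynomial.aeval_C, Polynomial.aeval_X, algebraMap_int_eq,
        eq_intCast, ← zsmul_eq_mul]
  obtain ⟨p, hpne, haeval⟩ := hpoly
  -- Step 3: factor out the largest power of `X`.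
  obtain ⟨k, q, hq0, hfac⟩ := exists_X_pow_mul_aux p.natDegree p le_rfl hpne
  set c : ℤ := q.coeff 0 with hc
  set w : R := Polynomial.aeval t q.divX with hw
  have htw : Commute t w := by
    have hcomm := (Commute.all Polynomial.X q.divX).map (Polynomial.aeval t)
    rwa [Polynomial.aeval_X] at hcomm
  have hqt : Polynomial.aeval t q = c • (1 : R) + t * w := by
    conv_lhs => rw [← Polynomial.X_mul_divX_add q]
    rw [map_add, map_mul, Polynomial.aeval_X, Polynomial.aeval_C, algebraMap_int_eq,
      eq_intCast, ← zsmul_one, add_comm]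
  have hrelk : t ^ k * (c • (1 : R) + t * w) = 0 := by
    rw [← hqt]
    have : Polynomial.aeval t p = t ^ k * Polynomial.aeval t q := by
      rw [hfac, map_mul, map_pow, Polynomial.aeval_X]
    rw [← this, haeval]
  have hrelK : t ^ (k + 1) * (c • (1 : R) + t * w) = 0 := by
    rw [pow_succ', mul_assoc, hrelk, mul_zero]
  set K := k + 1 with hK
  -- Step 4: geometric-series Bézout trick producing a central quasi-idempotent.
  set x₀ : R := c • (1 : R) with hx₀
  set y₀ : R := -(t * w) with hy₀
  have hxy : Commute x₀ y₀ := (Commute.one_left y₀).smul_left c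
  have hgeo := hxy.geom_sum₂_mul K
  set Sg : R := ∑ i ∈ Finset.range K, x₀ ^ i * y₀ ^ (K - 1 - i) with hSg
  have htx : Commute t x₀ := (Commute.one_right t).smul_right c
  have hty : Commute t y₀ := ((Commute.refl t).mul_right htw).neg_right
  have hSt : Commute t Sg := by
    refine Commute.sum_right _ _ _ fun i _ => ?_
    exact (htx.pow_right i).mul_right (hty.pow_right _)
  have hsub : x₀ - y₀ = c • (1 : R) + t * w := by rw [hx₀, hy₀, sub_neg_eq_add]
  have h0 : t ^ K * (x₀ - y₀) = 0 := by rw [hsub]; exact hrelK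
  have h1 : t ^ K * (x₀ ^ K - y₀ ^ K) = 0 := by
    calc t ^ K * (x₀ ^ K - y₀ ^ K) = t ^ K * (Sg * (x₀ - y₀)) := by rw [hgeo]
      _ = t ^ K * Sg * (x₀ - y₀) := (mul_assoc _ _ _).symm
      _ = Sg * t ^ K * (x₀ - y₀) := by rw [(hSt.pow_left K).eq]
      _ = Sg * (t ^ K * (x₀ - y₀)) := mul_assoc _ _ _
      _ = 0 := by rw [h0, mul_zero]
  have h2 : t ^ K * x₀ ^ K = t ^ K * y₀ ^ K := by
    rw [mul_sub] at h1; exact sub_eq_zero.mp h1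
  set ε : ℤ := (-1) ^ K with hε
  have hy₀K : y₀ ^ K = ε • (t ^ K * w ^ K) := by
    rw [hy₀, ← neg_one_zsmul (t * w), smul_pow, htw.mul_pow]
  have hx₀K : x₀ ^ K = (c ^ K) • (1 : R) := by rw [hx₀, smul_pow, one_pow]
  set N : ℤ := c ^ K with hN
  set f : R := ε • (t ^ K * w ^ K) with hf
  have hstar : t ^ K * f = N • t ^ K := by
    rw [← hy₀K, ← h2, hx₀K, mul_smul_comm, mul_one]
  have hNz : N ≠ 0 := pow_ne_zero _ hq0
  have hwf : w ^ K * f = f * w ^ K := by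
    have hcm : Commute (w ^ K) (t ^ K * w ^ K) :=
      ((htw.symm).pow_pow K K).mul_right (Commute.refl _)
    exact (hcm.smul_right ε).eq
  have hff : f * f = N • f := by
    calc f * f = ε • (t ^ K * w ^ K * f) := by rw [hf, smul_mul_assoc]
      _ = ε • (t ^ K * (w ^ K * f)) := by rw [mul_assoc]
      _ = ε • (t ^ K * (f * w ^ K)) := by rw [hwf]
      _ = ε • (t ^ K * f * w ^ K) := by rw [mul_assoc]
      _ = ε • ((N • t ^ K) * w ^ K) := by rw [hstar]
      _ = ε • (N • (t ^ K * w ^ K)) := by rw [smul_mul_assoc]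
      _ = N • (ε • (t ^ K * w ^ K)) := smul_comm _ _ _
      _ = N • f := by rw [hf]
  have hf0 : f ≠ 0 := by
    intro h
    refine hnil ⟨K, htf N _ hNz ?_⟩
    rw [← hstar, h, mul_zero]
  have hfc : f ∈ Subring.center R := quasi_central htf hce hNz hff
  have hKsplit : ∀ z : R, t * z = 0 → t ^ K * z = 0 := by
    intro z hz
    rw [hK, pow_succ, mul_assoc, hz, mul_zero]
  have hfz : ∀ z : R, z ∈ Subring.center R → t * z = 0 → f * z = 0 := by
    intro z hzc hz
    have hcz : ∀ g : R, g * z = z * g := fun g => Subring.mem_center_iff.mp hzc g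
    calc f * z = ε • (t ^ K * w ^ K * z) := by rw [hf, smul_mul_assoc]
      _ = ε • (t ^ K * (w ^ K * z)) := by rw [mul_assoc]
      _ = ε • (t ^ K * (z * w ^ K)) := by rw [hcz (w ^ K)]
      _ = ε • (t ^ K * z * w ^ K) := by rw [mul_assoc]
      _ = 0 := by rw [hKsplit z hz, zero_mul, smul_zero]
  exact final_step htf hce a b ht hNz hfc hff hf0 hfz
end

section
/- Let R be a commutative integral domain (with 1 ≠ 0) and let 𝓡 be the subring of 7×7 matrices over R (rows and columns indexed 0,…,6) consisting of matrices with all diagonal entries equal to a common α ∈ R; entries (0,1)=a, (0,2)=b, (0,3)=c, (0,4)=d, (0,5)=e, (0,6)=f; entry (1,3)=b; entry (1,6)=d; entry (2,6)=e; entry (4,6)=a; entry (5,6)=b; all other off-diagonal entries zero. Then 𝓡 is not commutative. -/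
/-- The matrix of Example 2.4: diagonal `α`, first row `(α, a, b, c, d, e, f)`,
entries `(1,3) = b`, `(1,6) = d`, `(2,6) = e`, `(4,6) = a`, `(5,6) = b`, other
off-diagonal entries zero. -/
def exMat {R : Type*} [CommRing R] (α a b c d e f : R) : Matrix (Fin 7) (Fin 7) R :=
  !![α, a, b, c, d, e, f;
     0, α, 0, b, 0, 0, d;
     0, 0, α, 0, 0, 0, e;
     0, 0, 0, α, 0, 0, 0;
     0, 0, 0, 0, α, 0, a;
     0, 0, 0, 0, 0, α, b;
     0, 0, 0, 0, 0, 0, α]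

/-- The set of all matrices of the form `exMat α a b c d e f`. -/
def exSet (R : Type*) [CommRing R] : Set (Matrix (Fin 7) (Fin 7) R) :=
  {M | ∃ α a b c d e f : R, M = exMat α a b c d e f}

/-- Example 2.4 (second part): the subring `𝓡` of `M₇(R)` with carrier `exSet R`
is not commutative. -/
theorem exSet_subring_not_commutative
    (R : Type*) [CommRing R] [IsDomain R]
    (𝓡 : Subring (Matrix (Fin 7) (Fin 7) R))
    (h𝓡 : (𝓡 : Set (Matrix (Fin 7) (Fin 7) R)) = exSet R) :
    ¬ (∀ x y : 𝓡, x * y = y * x) := by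
  intro h
  have hx : exMat (0:R) 1 0 0 0 0 0 ∈ 𝓡 := by
    rw [← SetLike.mem_coe, h𝓡]; exact ⟨0,1,0,0,0,0,0, rfl⟩
  have hy : exMat (0:R) 0 1 0 0 0 0 ∈ 𝓡 := by
    rw [← SetLike.mem_coe, h𝓡]; exact ⟨0,0,1,0,0,0,0, rfl⟩
  have h2 : exMat (0:R) 1 0 0 0 0 0 * exMat 0 0 1 0 0 0 0
      = exMat (0:R) 0 1 0 0 0 0 * exMat 0 1 0 0 0 0 0 :=
    congrArg Subtype.val (h ⟨_, hx⟩ ⟨_, hy⟩)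
  have h3 := congrFun (congrFun h2 0) 3
  simp [exMat, Matrix.mul_apply, Fin.sum_univ_succ, Matrix.cons_val_succ] at h3
end
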